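/- Let g : ℝ² → ℝ² be a smooth, curl-free vector field with g ∈ L²(ℝ²)², and let φ : ℝ² → ℝ be a smooth function with ∇φ = g that is bounded on the unit ball B = {|x| < 1}. Then for every unit vector e ∈ ℝ² and every R > 0, ∫_{B} |φ(x + Re)|² dx ≤ C₁ + C₂ R ‖g‖²_{L²(ℝ²)}, where C₁ depends only on sup_B |φ|. -/

import Mathlib

open MeasureTheory Real
open scoped ENNReal

private lemma aux_cs (h : ℝ → ℝ) (hc : Continuous h) (R : ℝ) (hR : 0 < R) :
    (∫ t in (0:ℝ)..R, h t) ^ 2 ≤ R * ∫ t in (0:ℝ)..R, (h t) ^ 2 := by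
  set A := ∫ t in (0:ℝ)..R, h t with hA
  set c := A / R with hc'
  have h1 : IntervalIntegrable h volume 0 R := hc.intervalIntegrable _ _
  have h2 : IntervalIntegrable (fun t => (h t) ^ 2) volume 0 R := (hc.pow 2).intervalIntegrable _ _
  have key : (0:ℝ) ≤ ∫ t in (0:ℝ)..R, (h t - c) ^ 2 :=
    intervalIntegral.integral_nonneg hR.le (fun t _ => sq_nonneg _)
  have expand : (∫ t in (0:ℝ)..R, (h t - c) ^ 2)
      = (∫ t in (0:ℝ)..R, (h t) ^ 2) - 2 * c * A + c ^ 2 * R := by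
    have : ∀ t, (h t - c) ^ 2 = (h t) ^ 2 - 2 * c * h t + c ^ 2 := by intro t; ring
    simp_rw [this]
    rw [intervalIntegral.integral_add (h2.sub ((h1.const_mul (2*c)).congr ?_)) (intervalIntegrable_const),
      intervalIntegral.integral_sub h2 (h1.const_mul (2*c))]
    · rw [intervalIntegral.integral_const, intervalIntegral.integral_const_mul]
      simp [← hA]; ring
    · exact fun _ _ => rfl
  have hRQ : (0:ℝ) ≤ ∫ t in (0:ℝ)..R, (h t)^2 :=
    intervalIntegral.integral_nonneg hR.le (fun t _ => sq_nonneg _)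
  rw [expand] at key
  have : c = A / R := hc'
  rw [this] at key
  have h3 : 2*(A/R)*A = 2*(A^2/R) := by ring
  have h4 : (A/R)^2*R = A^2/R := by field_simp [hR.ne']
  rw [h3, h4] at key
  have h5 : A^2/R ≤ ∫ t in (0:ℝ)..R, (h t)^2 := by linarith
  have h6 : A^2 = R * (A^2/R) := (mul_div_cancel₀ _ hR.ne').symm
  rw [h6]
  exact mul_le_mul_of_nonneg_left h5 hR.le

private lemma aux_ftc (g : (Fin 2 → ℝ) → (Fin 2 → ℝ)) (φ : (Fin 2 → ℝ) → ℝ)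
    (hg : ContDiff ℝ (⊤ : ℕ∞) g) (hφ : ContDiff ℝ (⊤ : ℕ∞) φ)
    (hgrad : ∀ x i, fderiv ℝ φ x (Pi.single i 1) = g x i)
    (e : Fin 2 → ℝ) (x : Fin 2 → ℝ) (R : ℝ) :
    φ (x + R • e) - φ (x + (0:ℝ) • e) = ∫ t in (0:ℝ)..R, ∑ i, e i * g (x + t • e) i := by
  have hderiv : ∀ t ∈ Set.uIcc (0:ℝ) R, HasDerivAt (fun t : ℝ => φ (x + t • e))
      (∑ i, e i * g (x + t • e) i) t := by
    intro t _
    have hu : HasDerivAt (fun t : ℝ => x + t • e) e t := by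
      simpa using ((hasDerivAt_id t).smul_const e).const_add x
    have hf : HasFDerivAt φ (fderiv ℝ φ (x + t • e)) (x + t • e) :=
      (hφ.differentiable (by simp) (x + t • e)).hasFDerivAt
    have h2 := hf.comp_hasDerivAt t hu
    have he : fderiv ℝ φ (x + t • e) e = ∑ i, e i * g (x + t • e) i := by
      have h1 : e = ∑ i, e i • (Pi.single i (1:ℝ) : Fin 2 → ℝ) := by
        have : ∀ i, e i • (Pi.single i (1:ℝ) : Fin 2 → ℝ) = Pi.single i (e i) := by
          intro i; rw [← Pi.single_smul]; simp
        simp_rw [this, Finset.univ_sum_single]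
      rw [show (fderiv ℝ φ (x + t • e)) e
          = (fderiv ℝ φ (x + t • e)) (∑ i, e i • (Pi.single i (1:ℝ) : Fin 2 → ℝ)) from by
        rw [← h1]]
      rw [map_sum]
      refine Finset.sum_congr rfl fun i _ => ?_
      rw [(fderiv ℝ φ (x + t • e)).map_smul, smul_eq_mul, hgrad]
    rw [← he]; exact h2
  have hcont : IntervalIntegrable (fun t : ℝ => ∑ i, e i * g (x + t • e) i) volume 0 R := by
    apply Continuous.intervalIntegrable
    exact continuous_finset_sum _ fun i _ => continuous_const.mul
      (((continuous_apply i).comp (hg.continuous.comp (continuous_const.add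
        (continuous_id.smul continuous_const)))))
  exact (intervalIntegral.integral_eq_sub_of_hasDerivAt hderiv hcont).symm

private lemma aux_fubini (G : (Fin 2 → ℝ) → ℝ) (hGc : Continuous G)
    (e : Fin 2 → ℝ) (he : (∑ i, (e i) ^ 2) = 1) (R : ℝ) :
    ∫⁻ x in {y : Fin 2 → ℝ | ∑ i, (y i) ^ 2 < 1},
        ∫⁻ t in Set.Ioc (0:ℝ) R, ENNReal.ofReal (G (x + t • e))
      ≤ 4 * ∫⁻ y, ENNReal.ofReal (G y) := by
  set B : Set (Fin 2 → ℝ) := {y : Fin 2 → ℝ | ∑ i, (y i) ^ 2 < 1} with hBdef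
  have hBopen : IsOpen B := by
    have : Continuous fun y : Fin 2 → ℝ => ∑ i, (y i) ^ 2 :=
      continuous_finset_sum _ fun i _ => (continuous_apply i).pow 2
    exact isOpen_lt this continuous_const
  have hBmeas : MeasurableSet B := hBopen.measurableSet
  set F : (Fin 2 → ℝ) → ℝ≥0∞ := fun z => ENNReal.ofReal (G z) with hF
  have hFmeas : Measurable F := (ENNReal.measurable_ofReal).comp hGc.measurable
  set χ : (Fin 2 → ℝ) → ℝ≥0∞ := B.indicator 1 with hχ
  have hχmeas : Measurable χ := measurable_one.indicator hBmeas
  have swap1 : ∫⁻ x in B, ∫⁻ t in Set.Ioc (0:ℝ) R, F (x + t • e)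
      = ∫⁻ t in Set.Ioc (0:ℝ) R, ∫⁻ x in B, F (x + t • e) := by
    apply lintegral_lintegral_swap
    apply Measurable.aemeasurable
    exact hFmeas.comp (measurable_fst.add (measurable_snd.smul measurable_const))
  rw [swap1]
  have inner1 : ∀ t : ℝ, ∫⁻ x in B, F (x + t • e) = ∫⁻ y, χ (y - t • e) * F y := by
    intro t
    rw [← lintegral_indicator hBmeas]
    rw [← lintegral_add_right_eq_self (fun x => B.indicator (fun x => F (x + t • e)) x) (-(t • e))]
    apply lintegral_congr
    intro y
    by_cases hy : y + -(t • e) ∈ B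
    · simp [Set.indicator_of_mem hy, hχ, Set.indicator_of_mem (show y - t • e ∈ B by
        simpa [sub_eq_add_neg] using hy), sub_eq_add_neg]
    · simp [Set.indicator_of_notMem hy, hχ, Set.indicator_of_notMem (show y - t • e ∉ B by
        simpa [sub_eq_add_neg] using hy)]
  simp_rw [inner1]
  have swap2 : ∫⁻ t in Set.Ioc (0:ℝ) R, ∫⁻ y, χ (y - t • e) * F y
      = ∫⁻ y, ∫⁻ t in Set.Ioc (0:ℝ) R, χ (y - t • e) * F y := by
    apply lintegral_lintegral_swap
    apply Measurable.aemeasurable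
    exact ((hχmeas.comp (measurable_snd.sub (measurable_fst.smul measurable_const))).mul
      (hFmeas.comp measurable_snd))
  rw [swap2]
  have inner2 : ∀ y : Fin 2 → ℝ,
      ∫⁻ t in Set.Ioc (0:ℝ) R, χ (y - t • e) * F y ≤ 4 * F y := by
    intro y
    set S : Set ℝ := {t : ℝ | y - t • e ∈ B} with hS
    have hSmeas : MeasurableSet S := by
      have : Continuous fun t : ℝ => y - t • e :=
        continuous_const.sub (continuous_id.smul continuous_const)
      exact (hBopen.preimage this).measurableSet
    have hSvol : volume S ≤ 4 := by
      rcases Set.eq_empty_or_nonempty S with hemp | ⟨t₀, ht₀⟩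
      · simp [hemp]
      · have hsub : S ⊆ Set.Icc (t₀ - 2) (t₀ + 2) := by
          intro t ht
          have ha : (y 0 - t₀ * e 0) ^ 2 + (y 1 - t₀ * e 1) ^ 2 < 1 := by
            have := ht₀
            simp only [hS, hBdef, Set.mem_setOf_eq, Fin.sum_univ_two] at this
            simpa [Pi.sub_apply, Pi.smul_apply, smul_eq_mul] using this
          have hb : (y 0 - t * e 0) ^ 2 + (y 1 - t * e 1) ^ 2 < 1 := by
            have := ht
            simp only [hS, hBdef, Set.mem_setOf_eq, Fin.sum_univ_two] at this
            simpa [Pi.sub_apply, Pi.smul_apply, smul_eq_mul] using this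
          have he2 : e 0 ^ 2 + e 1 ^ 2 = 1 := by
            simpa [Fin.sum_univ_two] using he
          constructor
          · nlinarith [sq_nonneg ((y 0 - t₀ * e 0) + (y 0 - t * e 0)),
              sq_nonneg ((y 1 - t₀ * e 1) + (y 1 - t * e 1)), sq_nonneg (t - t₀), he2]
          · nlinarith [sq_nonneg ((y 0 - t₀ * e 0) + (y 0 - t * e 0)),
              sq_nonneg ((y 1 - t₀ * e 1) + (y 1 - t * e 1)), sq_nonneg (t - t₀), he2]
        calc volume S ≤ volume (Set.Icc (t₀ - 2) (t₀ + 2)) := measure_mono hsub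
          _ = ENNReal.ofReal (t₀ + 2 - (t₀ - 2)) := Real.volume_Icc
          _ = 4 := by norm_num
    have hpt : ∀ t : ℝ, χ (y - t • e) = S.indicator 1 t := by
      intro t
      by_cases ht : t ∈ S
      · have hb : y - t • e ∈ B := ht
        simp [hχ, Set.indicator_of_mem ht, Set.indicator_of_mem hb]
      · have hb : y - t • e ∉ B := ht
        simp [hχ, Set.indicator_of_notMem ht, Set.indicator_of_notMem hb]
    simp_rw [hpt]
    rw [lintegral_mul_const _ ((measurable_one.indicator hSmeas))]
    rw [lintegral_indicator_one hSmeas]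
    rw [Measure.restrict_apply hSmeas]
    calc (volume (S ∩ Set.Ioc 0 R)) * F y ≤ (volume S) * F y :=
          mul_le_mul_left (measure_mono Set.inter_subset_left) _
      _ ≤ 4 * F y := mul_le_mul_left hSvol _
  calc ∫⁻ y, ∫⁻ t in Set.Ioc (0:ℝ) R, χ (y - t • e) * F y
      ≤ ∫⁻ y, 4 * F y := lintegral_mono inner2
    _ = 4 * ∫⁻ y, F y := lintegral_const_mul 4 hFmeas

/-- Bound in the mean for the potential of a 1D crystal. -/
theorem stmt_15 (g : (Fin 2 → ℝ) → (Fin 2 → ℝ)) (φ : (Fin 2 → ℝ) → ℝ)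
    (hg : ContDiff ℝ (⊤ : ℕ∞) g) (hgL2 : MemLp g 2 volume)
    (hcurl : ∀ x, fderiv ℝ g x (Pi.single 0 1) 1 = fderiv ℝ g x (Pi.single 1 1) 0)
    (hφ : ContDiff ℝ (⊤ : ℕ∞) φ)
    (hgrad : ∀ x i, fderiv ℝ φ x (Pi.single i 1) = g x i)
    (M : ℝ) (hM : ∀ x ∈ {y : Fin 2 → ℝ | ∑ i, (y i) ^ 2 < 1}, |φ x| ≤ M) :
    ∃ C₁ C₂ : ℝ, ∀ e : Fin 2 → ℝ, (∑ i, (e i) ^ 2) = 1 → ∀ R : ℝ, 0 < R →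
      ∫ x in {y : Fin 2 → ℝ | ∑ i, (y i) ^ 2 < 1}, (φ (x + R • e)) ^ 2
        ≤ C₁ + C₂ * R * ∫ x : Fin 2 → ℝ, ∑ i, (g x i) ^ 2 := by
  classical
  set B : Set (Fin 2 → ℝ) := {y : Fin 2 → ℝ | ∑ i, (y i) ^ 2 < 1} with hBdef
  have hBopen : IsOpen B := by
    have : Continuous fun y : Fin 2 → ℝ => ∑ i, (y i) ^ 2 :=
      continuous_finset_sum _ fun i _ => (continuous_apply i).pow 2
    exact isOpen_lt this continuous_const
  have hBmeas : MeasurableSet B := hBopen.measurableSet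
  have hBvol : volume B < ⊤ := by
    have hsub : B ⊆ Metric.ball (0 : Fin 2 → ℝ) 2 := by
      intro y hy
      simp only [hBdef, Set.mem_setOf_eq, Fin.sum_univ_two] at hy
      have key : ∀ i : Fin 2, (y i) ^ 2 < 1 := by
        rw [Fin.forall_fin_two]
        constructor <;> nlinarith [sq_nonneg (y 0), sq_nonneg (y 1)]
      rw [Metric.mem_ball, dist_zero_right, pi_norm_lt_iff (by norm_num : (0:ℝ) < 2)]
      intro i
      rw [Real.norm_eq_abs, abs_lt]
      constructor <;> nlinarith [key i]
    exact lt_of_le_of_lt (measure_mono hsub) measure_ball_lt_top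
  set G : (Fin 2 → ℝ) → ℝ := fun y => ∑ i, (g y i) ^ 2 with hGdef
  have hGc : Continuous G :=
    continuous_finset_sum _ fun i _ => ((continuous_apply i).comp hg.continuous).pow 2
  have hGnn : ∀ y, 0 ≤ G y := fun y => Finset.sum_nonneg fun i _ => sq_nonneg _
  have hGint : Integrable G := by
    have h1 : Integrable (fun x => ‖g x‖ ^ (2:ℝ)) :=
      hgL2.integrable_norm_rpow two_ne_zero (by norm_num)
    refine (h1.const_mul 2).mono' hGc.aestronglyMeasurable (Filter.Eventually.of_forall fun x => ?_)
    rw [Real.norm_eq_abs, abs_of_nonneg (hGnn x)]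
    have : ∀ i, (g x i) ^ 2 ≤ ‖g x‖ ^ 2 := by
      intro i
      have := norm_le_pi_norm (g x) i
      have h0 : |g x i| ≤ ‖g x‖ := by simpa using this
      nlinarith [abs_nonneg (g x i), norm_nonneg (g x), sq_abs (g x i)]
    have h2 : G x ≤ 2 * ‖g x‖ ^ 2 := by
      simp only [hGdef, Fin.sum_univ_two]
      nlinarith [this 0, this 1]
    calc G x ≤ 2 * ‖g x‖ ^ 2 := h2
      _ = 2 * ‖g x‖ ^ (2:ℝ) := by rw [← Real.rpow_natCast ‖g x‖ 2]; norm_num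
  set K : ℝ≥0∞ := ∫⁻ y, ENNReal.ofReal (G y) with hK
  have hKfin : K < ⊤ := hGint.lintegral_lt_top
  have hKtoReal : K.toReal = ∫ x, G x := by
    rw [integral_eq_lintegral_of_nonneg_ae (Filter.Eventually.of_forall hGnn)
      hGc.aestronglyMeasurable]
  have hM0 : 0 ≤ M := by
    have h0 : (0 : Fin 2 → ℝ) ∈ B := by simp [hBdef]
    exact le_trans (abs_nonneg _) (hM 0 h0)
  refine ⟨2 * M ^ 2 * (volume B).toReal, 8, ?_⟩
  intro e he R hR
  -- pointwise bound
  have hIdef : ∀ x : Fin 2 → ℝ, True := fun _ => trivial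
  have hpoint : ∀ x ∈ B, (φ (x + R • e)) ^ 2
      ≤ 2 * M ^ 2 + 2 * R * ∫ t in (0:ℝ)..R, G (x + t • e) := by
    intro x hx
    have hftc := aux_ftc g φ hg hφ hgrad e x R
    rw [show x + (0:ℝ) • e = x by simp] at hftc
    set A := ∫ t in (0:ℝ)..R, ∑ i, e i * g (x + t • e) i with hA
    have hφx : φ (x + R • e) = φ x + A := by linarith [hftc]
    have hcont : Continuous fun t : ℝ => ∑ i, e i * g (x + t • e) i :=
      continuous_finset_sum _ fun i _ => continuous_const.mul
        (((continuous_apply i).comp (hg.continuous.comp (continuous_const.add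
          (continuous_id.smul continuous_const)))))
    have hcs : A ^ 2 ≤ R * ∫ t in (0:ℝ)..R, (∑ i, e i * g (x + t • e) i) ^ 2 :=
      aux_cs _ hcont R hR
    have hmono : (∫ t in (0:ℝ)..R, (∑ i, e i * g (x + t • e) i) ^ 2)
        ≤ ∫ t in (0:ℝ)..R, G (x + t • e) := by
      apply intervalIntegral.integral_mono_on hR.le
        ((hcont.pow 2).intervalIntegrable _ _)
        ((hGc.comp (continuous_const.add (continuous_id.smul
          continuous_const))).intervalIntegrable _ _)
      intro t _
      calc (∑ i, e i * g (x + t • e) i) ^ 2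
          ≤ (∑ i, (e i) ^ 2) * ∑ i, (g (x + t • e) i) ^ 2 :=
            Finset.sum_mul_sq_le_sq_mul_sq _ _ _
        _ = G (x + t • e) := by rw [he, one_mul]
    have hφxB : (φ x) ^ 2 ≤ M ^ 2 := by
      have := hM x hx
      nlinarith [abs_nonneg (φ x), sq_abs (φ x)]
    have hAB : A ^ 2 ≤ R * ∫ t in (0:ℝ)..R, G (x + t • e) :=
      le_trans hcs (mul_le_mul_of_nonneg_left hmono hR.le)
    rw [hφx]
    nlinarith [sq_nonneg (φ x - A), hφxB, hAB]
  -- convert interval integral to lintegral bound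
  have hIle : ∀ x : Fin 2 → ℝ,
      ENNReal.ofReal (∫ t in (0:ℝ)..R, G (x + t • e))
        ≤ ∫⁻ t in Set.Ioc (0:ℝ) R, ENNReal.ofReal (G (x + t • e)) := by
    intro x
    have hc : Continuous fun t : ℝ => G (x + t • e) :=
      hGc.comp (continuous_const.add (continuous_id.smul continuous_const))
    rw [intervalIntegral.integral_of_le hR.le]
    rw [integral_eq_lintegral_of_nonneg_ae (Filter.Eventually.of_forall fun t => hGnn _)
      hc.aestronglyMeasurable.restrict]
    exact ENNReal.ofReal_toReal_le
  -- main lintegral chain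
  have hL : ∫⁻ x in B, ENNReal.ofReal ((φ (x + R • e)) ^ 2)
      ≤ ENNReal.ofReal (2 * M ^ 2) * volume B + ENNReal.ofReal (2 * R) * (4 * K) := by
    have step1 : ∫⁻ x in B, ENNReal.ofReal ((φ (x + R • e)) ^ 2)
        ≤ ∫⁻ x in B, (ENNReal.ofReal (2 * M ^ 2)
            + ENNReal.ofReal (2 * R) * ∫⁻ t in Set.Ioc (0:ℝ) R, ENNReal.ofReal (G (x + t • e))) := by
      apply setLIntegral_mono
      · apply Measurable.const_add
        apply Measurable.const_mul
        apply Measurable.lintegral_prod_right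
        exact (ENNReal.measurable_ofReal).comp (hGc.measurable.comp
          (measurable_fst.add (measurable_snd.smul measurable_const)))
      · intro x hx
        calc ENNReal.ofReal ((φ (x + R • e)) ^ 2)
            ≤ ENNReal.ofReal (2 * M ^ 2 + 2 * R * ∫ t in (0:ℝ)..R, G (x + t • e)) :=
              ENNReal.ofReal_le_ofReal (hpoint x hx)
          _ ≤ ENNReal.ofReal (2 * M ^ 2)
              + ENNReal.ofReal (2 * R * ∫ t in (0:ℝ)..R, G (x + t • e)) :=
              ENNReal.ofReal_add_le
          _ = ENNReal.ofReal (2 * M ^ 2)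
              + ENNReal.ofReal (2 * R) * ENNReal.ofReal (∫ t in (0:ℝ)..R, G (x + t • e)) := by
              rw [ENNReal.ofReal_mul (p := 2 * R) (by positivity)]
          _ ≤ ENNReal.ofReal (2 * M ^ 2)
              + ENNReal.ofReal (2 * R) * ∫⁻ t in Set.Ioc (0:ℝ) R, ENNReal.ofReal (G (x + t • e)) := by
              exact add_le_add_right (mul_le_mul_right (hIle x) _) _
    have step2 : ∫⁻ x in B, (ENNReal.ofReal (2 * M ^ 2)
            + ENNReal.ofReal (2 * R) * ∫⁻ t in Set.Ioc (0:ℝ) R, ENNReal.ofReal (G (x + t • e)))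
        = ENNReal.ofReal (2 * M ^ 2) * volume B
          + ENNReal.ofReal (2 * R)
            * ∫⁻ x in B, ∫⁻ t in Set.Ioc (0:ℝ) R, ENNReal.ofReal (G (x + t • e)) := by
      rw [lintegral_add_left measurable_const, lintegral_const,
        Measure.restrict_apply_univ, lintegral_const_mul' _ _ ENNReal.ofReal_ne_top]
    have step3 : (∫⁻ x in B, ∫⁻ t in Set.Ioc (0:ℝ) R, ENNReal.ofReal (G (x + t • e)))
        ≤ 4 * K := aux_fubini G hGc e he R
    calc ∫⁻ x in B, ENNReal.ofReal ((φ (x + R • e)) ^ 2)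
        ≤ _ := step1
      _ = _ := step2
      _ ≤ ENNReal.ofReal (2 * M ^ 2) * volume B + ENNReal.ofReal (2 * R) * (4 * K) :=
          add_le_add_right (mul_le_mul_right step3 _) _
  -- convert back to real integrals
  have hTne : ENNReal.ofReal (2 * M ^ 2) * volume B + ENNReal.ofReal (2 * R) * (4 * K) ≠ ⊤ := by
    apply ENNReal.add_ne_top.mpr
    constructor
    · exact ENNReal.mul_ne_top ENNReal.ofReal_ne_top hBvol.ne
    · exact ENNReal.mul_ne_top ENNReal.ofReal_ne_top
        (ENNReal.mul_ne_top (by norm_num) hKfin.ne)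
  have hLHS : ∫ x in B, (φ (x + R • e)) ^ 2
      = (∫⁻ x in B, ENNReal.ofReal ((φ (x + R • e)) ^ 2)).toReal := by
    have hc : Continuous fun x : Fin 2 → ℝ => (φ (x + R • e)) ^ 2 :=
      (hφ.continuous.comp (continuous_id.add continuous_const)).pow 2
    rw [integral_eq_lintegral_of_nonneg_ae (Filter.Eventually.of_forall fun x => sq_nonneg _)
      hc.aestronglyMeasurable.restrict]
  rw [hLHS]
  have := ENNReal.toReal_mono hTne hL
  apply le_trans this
  rw [ENNReal.toReal_add (ENNReal.mul_ne_top ENNReal.ofReal_ne_top hBvol.ne)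
    (ENNReal.mul_ne_top ENNReal.ofReal_ne_top (ENNReal.mul_ne_top (by norm_num) hKfin.ne))]
  rw [ENNReal.toReal_mul, ENNReal.toReal_mul, ENNReal.toReal_mul]
  rw [ENNReal.toReal_ofReal (by positivity), ENNReal.toReal_ofReal (by positivity)]
  have h4 : ((4:ℝ≥0∞)).toReal = 4 := by norm_num
  rw [h4, hKtoReal]
  have : ∫ x, G x = ∫ x : Fin 2 → ℝ, ∑ i, (g x i) ^ 2 := rfl
  rw [this]
  ring_nf
  nlinarith [hR]
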